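/- Let Γ be a consistent RCC5 network, fix i ≠ j with constraint R = R_ij, and let W be the intersection of CT(π) over all paths π from v_i to v_j in Γ in which no consecutive pair of variables is {v_i, v_j} (W = ⋆ if there is no such path). If W ⊆ R, then the constraint (v_i R v_j) is redundant in Γ. -/

import Mathlib

/-- A *region* is a nonempty regular closed subset of the Euclidean plane `ℝ × ℝ`. -/
def Region : Type :=
  {x : Set (ℝ × ℝ) // x.Nonempty ∧ x = closure (interior x)}

namespace Region

/-- Part-of: `x P y` iff `x ⊆ y`. -/
def P (x y : Region) : Prop := x.1 ⊆ y.1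

/-- Overlap: `x O y` iff some region is a common part of `x` and `y`. -/
def O (x y : Region) : Prop := ∃ z : Region, z.1 ⊆ x.1 ∧ z.1 ⊆ y.1

/-- Connection: `x C y` iff `x ∩ y ≠ ∅`. -/
def C (x y : Region) : Prop := (x.1 ∩ y.1).Nonempty

end Region

/-- The five basic RCC5 relations. -/
inductive RCC5Basic : Type
  | DR | PO | PP | PPi | EQ
deriving DecidableEq

namespace RCC5Basic

/-- Interpretation of the basic RCC5 relations on regions. -/
def interp : RCC5Basic → Region → Region → Prop
  | DR, x, y => ¬ Region.O x y
  | PO, x, y => Region.O x y ∧ ¬ x.1 ⊆ y.1 ∧ ¬ y.1 ⊆ x.1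
  | PP, x, y => x.1 ⊆ y.1 ∧ x ≠ y
  | PPi, x, y => y.1 ⊆ x.1 ∧ x ≠ y
  | EQ, x, y => x = y

/-- Converse of a basic RCC5 relation. -/
def conv : RCC5Basic → RCC5Basic
  | DR => DR | PO => PO | PP => PPi | PPi => PP | EQ => EQ

end RCC5Basic

/-- An RCC5 relation is a union of basic relations, identified with a subset of `B₅`. -/
abbrev RCC5Rel : Type := Set RCC5Basic

namespace RCC5Rel

/-- A pair of regions is an instance of an RCC5 relation iff it is an instance of one of
its basic relations. -/
def interp (R : RCC5Rel) (x y : Region) : Prop := ∃ b ∈ R, RCC5Basic.interp b x y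

/-- Converse of an RCC5 relation. -/
def conv (R : RCC5Rel) : RCC5Rel := {b | RCC5Basic.conv b ∈ R}

/-- Weak composition: `γ ∈ R ⋄ S` iff `γ` intersects the relational composition `R ∘ S`. -/
def comp (R S : RCC5Rel) : RCC5Rel :=
  {γ | ∃ x z : Region, RCC5Basic.interp γ x z ∧
        ∃ y : Region, RCC5Rel.interp R x y ∧ RCC5Rel.interp S y z}

lemma conv_univ : RCC5Rel.conv Set.univ = Set.univ := by
  ext b; simp [RCC5Rel.conv]

end RCC5Rel

/-- A distributive subalgebra of RCC5: contains all basic relations, is closed under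
converse, weak composition and (nonempty) intersection, and weak composition distributes
over nonempty intersections. -/
def IsDistributiveSubalgebra (𝒮 : Set RCC5Rel) : Prop :=
  (∀ b : RCC5Basic, ({b} : RCC5Rel) ∈ 𝒮) ∧
  (∀ R ∈ 𝒮, RCC5Rel.conv R ∈ 𝒮) ∧
  (∀ R ∈ 𝒮, ∀ S ∈ 𝒮, RCC5Rel.comp R S ∈ 𝒮) ∧
  (∀ R ∈ 𝒮, ∀ S ∈ 𝒮, (R ∩ S).Nonempty → R ∩ S ∈ 𝒮) ∧
  (∀ R ∈ 𝒮, ∀ T₁ ∈ 𝒮, ∀ T₂ ∈ 𝒮, (T₁ ∩ T₂).Nonempty →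
    RCC5Rel.comp R (T₁ ∩ T₂) = RCC5Rel.comp R T₁ ∩ RCC5Rel.comp R T₂ ∧
    RCC5Rel.comp (T₁ ∩ T₂) R = RCC5Rel.comp T₁ R ∩ RCC5Rel.comp T₂ R)

/-- An RCC5 (constraint) network on `n` variables. -/
structure RCC5Network (n : ℕ) where
  rel : Fin n → Fin n → RCC5Rel
  conv_rel : ∀ i j, rel j i = RCC5Rel.conv (rel i j)
  diag : ∀ i, rel i i = {RCC5Basic.EQ}

namespace RCC5Network

variable {n : ℕ}

/-- A solution of a network assigns regions to the variables satisfying all constraints. -/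
def IsSolution (Γ : RCC5Network n) (a : Fin n → Region) : Prop :=
  ∀ i j, RCC5Rel.interp (Γ.rel i j) (a i) (a j)

/-- A network is consistent if it has a solution. -/
def Consistent (Γ : RCC5Network n) : Prop := ∃ a, Γ.IsSolution a

/-- `Γ` entails the constraint `(v_i S v_j)`. -/
def Entails (Γ : RCC5Network n) (i j : Fin n) (S : RCC5Rel) : Prop :=
  ∀ a, Γ.IsSolution a → RCC5Rel.interp S (a i) (a j)

/-- All-different: consistent and no two distinct variables are forced to be equal. -/
def AllDifferent (Γ : RCC5Network n) : Prop :=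
  Γ.Consistent ∧ ∀ i j, i ≠ j → ¬ Γ.Entails i j {RCC5Basic.EQ}

/-- Path-consistency. -/
def PathConsistent (Γ : RCC5Network n) : Prop :=
  ∀ i j k, (Γ.rel i j).Nonempty ∧ Γ.rel i j ⊆ RCC5Rel.comp (Γ.rel i k) (Γ.rel k j)

/-- The network is over the subclass `𝒮`. -/
def Over (Γ : RCC5Network n) (𝒮 : Set RCC5Rel) : Prop := ∀ i j, Γ.rel i j ∈ 𝒮

/-- `Γ'` refines `Γ`. -/
def Refines (Γ' Γ : RCC5Network n) : Prop := ∀ i j, Γ'.rel i j ⊆ Γ.rel i j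

/-- `Γp` is the a-closure of `Γ`: the pointwise-largest path-consistent refinement. -/
def IsAClosure (Γp Γ : RCC5Network n) : Prop :=
  Γp.PathConsistent ∧ Γp.Refines Γ ∧
    ∀ Γ' : RCC5Network n, Γ'.PathConsistent → Γ'.Refines Γ → Γ'.Refines Γp

/-- A scenario of (the restriction of) `Γ` on the variable set `V`. -/
def IsScenarioOn (Γ : RCC5Network n) (V : Set (Fin n)) (s : Fin n → Fin n → RCC5Basic) : Prop :=
  (∀ i ∈ V, ∀ j ∈ V, s i j ∈ Γ.rel i j) ∧
  (∀ i ∈ V, ∀ j ∈ V, s j i = RCC5Basic.conv (s i j)) ∧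
  (∀ i ∈ V, s i i = RCC5Basic.EQ)

/-- Consistency of a scenario on a variable set `V`. -/
def ScenarioConsistentOn (V : Set (Fin n)) (s : Fin n → Fin n → RCC5Basic) : Prop :=
  ∃ a : Fin n → Region, ∀ i ∈ V, ∀ j ∈ V, RCC5Basic.interp (s i j) (a i) (a j)

/-- Weakly globally consistent: every consistent scenario of a restriction of `Γ` extends
to a consistent scenario of `Γ`. -/
def WeaklyGloballyConsistent (Γ : RCC5Network n) : Prop :=
  ∀ V : Set (Fin n), V.Nonempty → ∀ s, Γ.IsScenarioOn V s → ScenarioConsistentOn V s →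
    ∃ s', Γ.IsScenarioOn Set.univ s' ∧ ScenarioConsistentOn Set.univ s' ∧
      ∀ i ∈ V, ∀ j ∈ V, s' i j = s i j

/-- Minimality: every basic relation in every constraint is feasible. -/
def Minimal (Γ : RCC5Network n) : Prop :=
  ∀ i j, i ≠ j → ∀ α ∈ Γ.rel i j,
    ∃ a, Γ.IsSolution a ∧ RCC5Basic.interp α (a i) (a j)

/-- Weak composition `CT` along a path `u :: l` of variables. -/
def pathCT (Γ : RCC5Network n) : Fin n → List (Fin n) → RCC5Rel
  | _, [] => Set.univ
  | u, [v] => Γ.rel u v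
  | u, v :: w :: rest => RCC5Rel.comp (Γ.rel u v) (pathCT Γ v (w :: rest))

/-- The network obtained from `Γ` by replacing the constraints between `v_i` and `v_j`
(`i ≠ j`) by the universal relation. -/
def removeEdge (Γ : RCC5Network n) (i j : Fin n) : RCC5Network n where
  rel a b := if i ≠ j ∧ ((a = i ∧ b = j) ∨ (a = j ∧ b = i)) then Set.univ else Γ.rel a b
  conv_rel a b := by
    by_cases h : i ≠ j ∧ ((a = i ∧ b = j) ∨ (a = j ∧ b = i))
    · have h' : i ≠ j ∧ ((b = i ∧ a = j) ∨ (b = j ∧ a = i)) := by tauto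
      simp only [if_pos h, if_pos h', RCC5Rel.conv_univ]
    · have h' : ¬(i ≠ j ∧ ((b = i ∧ a = j) ∨ (b = j ∧ a = i))) := by tauto
      simp only [if_neg h, if_neg h']
      exact Γ.conv_rel a b
  diag a := by
    have h : ¬(i ≠ j ∧ ((a = i ∧ a = j) ∨ (a = j ∧ a = i))) := by
      rintro ⟨hij, ⟨h1, h2⟩ | ⟨h1, h2⟩⟩
      · exact hij (h1.symm.trans h2)
      · exact hij (h2.symm.trans h1)
    simp only [if_neg h]
    exact Γ.diag a

/-- A constraint `(v_i R_ij v_j)` is redundant in `Γ` if the network obtained by replacing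
it (and its converse) with the universal relation entails it. -/
def Redundant (Γ : RCC5Network n) (i j : Fin n) : Prop :=
  (Γ.removeEdge i j).Entails i j (Γ.rel i j)

open Classical in
/-- The core of `Γ`: every redundant constraint (and its converse) is replaced by the
universal relation. -/
noncomputable def core (Γ : RCC5Network n) : RCC5Network n where
  rel a b := if a ≠ b ∧ (Γ.Redundant a b ∨ Γ.Redundant b a) then Set.univ else Γ.rel a b
  conv_rel a b := by
    by_cases h : a ≠ b ∧ (Γ.Redundant a b ∨ Γ.Redundant b a)
    · have h' : b ≠ a ∧ (Γ.Redundant b a ∨ Γ.Redundant a b) := ⟨h.1.symm, h.2.symm⟩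
      simp only [if_pos h, if_pos h', RCC5Rel.conv_univ]
    · have h' : ¬(b ≠ a ∧ (Γ.Redundant b a ∨ Γ.Redundant a b)) := by
        intro hc; exact h ⟨hc.1.symm, hc.2.symm⟩
      simp only [if_neg h, if_neg h']
      exact Γ.conv_rel a b
  diag a := by
    have h : ¬(a ≠ a ∧ (Γ.Redundant a a ∨ Γ.Redundant a a)) := fun hc => hc.1 rfl
    simp only [if_neg h]
    exact Γ.diag a

end RCC5Network

/-- A path from `i` to `j` in a network on `n` variables: a nonempty list `l` of successive
vertices (so the path is `i :: l`), with consecutive vertices distinct, ending at `j`. -/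
def IsPathFrom {n : ℕ} (i j : Fin n) (l : List (Fin n)) : Prop :=
  l ≠ [] ∧ l.getLast? = some j ∧ List.Chain (· ≠ ·) i l

/-- The path `u :: l` never traverses the edge `{i, j}` (in either direction). -/
def AvoidsEdge {n : ℕ} (i j : Fin n) (u : Fin n) (l : List (Fin n)) : Prop :=
  List.Chain (fun a b => ¬(a = i ∧ b = j) ∧ ¬(a = j ∧ b = i)) u l

lemma exists_basic (x y : Region) : ∃ b : RCC5Basic, RCC5Basic.interp b x y := by
  by_cases hxy : x = y
  · exact ⟨RCC5Basic.EQ, hxy⟩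
  by_cases h1 : x.1 ⊆ y.1
  · exact ⟨RCC5Basic.PP, h1, hxy⟩
  by_cases h2 : y.1 ⊆ x.1
  · exact ⟨RCC5Basic.PPi, h2, hxy⟩
  by_cases hO : Region.O x y
  · exact ⟨RCC5Basic.PO, hO, h1, h2⟩
  · exact ⟨RCC5Basic.DR, hO⟩

lemma removeEdge_rel_eq {n : ℕ} (Γ : RCC5Network n) (i j u v : Fin n)
    (h1 : ¬(u = i ∧ v = j)) (h2 : ¬(u = j ∧ v = i)) :
    (Γ.removeEdge i j).rel u v = Γ.rel u v := by
  simp only [RCC5Network.removeEdge]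
  rw [if_neg]; tauto

lemma pathCT_interp {n : ℕ} (Γ : RCC5Network n) (i j : Fin n)
    (a : Fin n → Region) (ha : (Γ.removeEdge i j).IsSolution a) :
    ∀ (l : List (Fin n)) (u : Fin n), l.getLast? = some j →
      AvoidsEdge i j u l → RCC5Rel.interp (Γ.pathCT u l) (a u) (a j) := by
  intro l
  induction l with
  | nil => intro u h; simp at h
  | cons v tl ih =>
    intro u hlast havoid
    simp only [AvoidsEdge, List.Chain, List.chain_cons] at havoid
    cases tl with
    | nil =>
      simp only [List.getLast?_singleton, Option.some_inj] at hlast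
      rw [hlast] at havoid ⊢
      have hui : u ≠ i := fun h => havoid.1.1 ⟨h, rfl⟩
      have hrel := removeEdge_rel_eq Γ i j u j (fun h => hui h.1)
        (fun h => hui (h.1.trans h.2))
      have := ha u j
      rw [hrel] at this
      exact this
    | cons w rest =>
      obtain ⟨b, hb⟩ := exists_basic (a u) (a j)
      refine ⟨b, ⟨a u, a j, hb, a v, ?_, ?_⟩, hb⟩
      · have hrel := removeEdge_rel_eq Γ i j u v havoid.1.1 havoid.1.2
        have := ha u v
        rwa [hrel] at this
      · exact ih v (by rwa [List.getLast?_cons_cons] at hlast) havoid.2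

/-- If `W ⊆ R_ij`, where `W` is the intersection of the weak compositions of all paths
from `v_i` to `v_j` avoiding the edge `{v_i, v_j}`, then `(v_i R_ij v_j)` is redundant. -/
theorem subset_of_avoiding_paths_implies_redundant {n : ℕ} (Γ : RCC5Network n)
    (hcons : Γ.Consistent) (i j : Fin n) (hij : i ≠ j)
    (hW : (⋂ l ∈ {l : List (Fin n) | IsPathFrom i j l ∧ AvoidsEdge i j i l},
            Γ.pathCT i l) ⊆ Γ.rel i j) :
    Γ.Redundant i j := by
  intro a ha
  obtain ⟨b, hb⟩ := exists_basic (a i) (a j)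
  refine ⟨b, hW ?_, hb⟩
  rw [Set.mem_iInter₂]
  rintro l ⟨⟨hne, hlast, _⟩, havoid⟩
  cases l with
  | nil => exact absurd rfl hne
  | cons v tl =>
    rw [AvoidsEdge, List.Chain, List.chain_cons] at havoid
    cases tl with
    | nil =>
      simp only [List.getLast?_singleton, Option.some_inj] at hlast
      exact absurd ⟨rfl, hlast⟩ havoid.1.1
    | cons w rest =>
      refine ⟨a i, a j, hb, a v, ?_, ?_⟩
      · have hrel := removeEdge_rel_eq Γ i j i v havoid.1.1 havoid.1.2
        have := ha i v
        rwa [hrel] at this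
      · exact pathCT_interp Γ i j a ha (w :: rest) v
          (by rwa [List.getLast?_cons_cons] at hlast) havoid.2
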